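/- Let V be a vector space over a field K of characteristic zero and * : V × V → V a bilinear (magmatic) product. Then * extends uniquely to a bilinear map * : T(V) × T(V) → T(V) such that for all f, g, h ∈ T(V) and y ∈ V: (i) ε(f*g) = ε(f)ε(g); (ii) Δ(f*g) = Δ(f)*Δ(g), where * acts componentwise on tensors ((a⊗b)*(c⊗d) = (a*c)⊗(b*d)); (iii) f*1 = f; (iv) 1*f = ε(f)·1; (v) f*(g·y) = (f*g)*y − f*(g*y); (vi) (f·g)*h = (f*h⁽¹⁾)·(g*h⁽²⁾); (vii) (f*g)*h = f*((g*h⁽¹⁾)·h⁽²⁾), writing Δ(h) = h⁽¹⁾ ⊗ h⁽²⁾ in Sweedler notation. -/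

import Mathlib

/-!
For `y ∈ V` let `D_y` be the derivation of `T(V)` extending `v ↦ v * y`, and put
`Φ_y h = h·y + D_y h`. Any solution has `f * y = D_y f` (induction on `f` using (vi), (iii),
(iv)), so (v) says `f * Φ_y h = D_y (f * h)`: the operator `f ↦ f * g` is forced to be
`D_{y_n} ∘ ⋯ ∘ D_{y_1}` on `g = Φ_{y_n} ⋯ Φ_{y_1} 1`. The linear map
`y_1 ⋯ y_n ↦ Φ_{y_n} ⋯ Φ_{y_1} 1` is the identity plus words of smaller length, hence
bijective, which gives existence and uniqueness at once.
Each of (i)–(vii) is linear in its last argument `h`, holds for `h = 1` and survives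
`h ↦ Φ_y h`, because `ε`, `Δ` and the products involved intertwine `Φ_y` with `D_y`.
-/

open TensorProduct

/-- The counit of the tensor algebra `T(V)`: the unique algebra morphism `T(V) → K`
vanishing on `V`. -/
noncomputable def taCounit (K V : Type*) [Field K] [AddCommGroup V] [Module K V] :
    TensorAlgebra K V →ₐ[K] K :=
  TensorAlgebra.lift K (0 : V →ₗ[K] K)

/-- The unshuffle coproduct of the tensor algebra `T(V)`: the unique algebra morphism
`T(V) → T(V) ⊗ T(V)` with `Δ(v) = v ⊗ 1 + 1 ⊗ v` for `v ∈ V`. -/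
noncomputable def taComul (K V : Type*) [Field K] [AddCommGroup V] [Module K V] :
    TensorAlgebra K V →ₐ[K] TensorAlgebra K V ⊗[K] TensorAlgebra K V :=
  TensorAlgebra.lift K
    (((TensorProduct.mk K (TensorAlgebra K V) (TensorAlgebra K V)).flip 1
        + TensorProduct.mk K (TensorAlgebra K V) (TensorAlgebra K V) 1)
      ∘ₗ TensorAlgebra.ι K)

namespace LinearMap

variable {R A : Type*} [CommSemiring R] [AddCommMonoid A] [Module R A]

noncomputable def rTensorAddLTensor (d : Module.End R A) : Module.End R (A ⊗[R] A) :=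
  d.rTensor A + d.lTensor A

@[simp]
theorem rTensorAddLTensor_tmul (d : Module.End R A) (a b : A) :
    d.rTensorAddLTensor (a ⊗ₜ b) = d a ⊗ₜ b + a ⊗ₜ d b := rfl

theorem rTensorAddLTensor_add (d₁ d₂ : Module.End R A) :
    (d₁ + d₂).rTensorAddLTensor = d₁.rTensorAddLTensor + d₂.rTensorAddLTensor := by
  simp only [rTensorAddLTensor, rTensor_add, lTensor_add]
  abel

end LinearMap

def IsDerivation {R A : Type*} [CommSemiring R] [Semiring A] [Algebra R A]
    (d : Module.End R A) : Prop :=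
  ∀ a b, d (a * b) = d a * b + a * d b

namespace IsDerivation

variable {R A : Type*} [CommSemiring R] [Ring A] [Algebra R A] {d d₁ d₂ : Module.End R A}

theorem map_one (hd : IsDerivation d) : d 1 = 0 := by
  simpa using hd 1 1

theorem map_algebraMap (hd : IsDerivation d) (r : R) : d (algebraMap R A r) = 0 := by
  rw [Algebra.algebraMap_eq_smul_one, map_smul, hd.map_one, smul_zero]

theorem add (h₁ : IsDerivation d₁) (h₂ : IsDerivation d₂) : IsDerivation (d₁ + d₂) := by
  intro a b
  simp only [LinearMap.add_apply, h₁ a b, h₂ a b, add_mul, mul_add]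
  abel

theorem smul (hd : IsDerivation d) (r : R) : IsDerivation (r • d) := by
  intro a b
  simp only [LinearMap.smul_apply, hd a b, smul_add, smul_mul_assoc, mul_smul_comm]

theorem rTensorAddLTensor (hd : IsDerivation d) : IsDerivation d.rTensorAddLTensor := by
  intro z w
  induction z with
  | zero => simp
  | add z₁ z₂ h₁ h₂ => simp only [add_mul, map_add, h₁, h₂]; abel
  | tmul a b =>
    induction w with
    | zero => simp
    | add w₁ w₂ h₁ h₂ => simp only [mul_add, map_add, h₁, h₂]; abel
    | tmul c e =>
      simp only [Algebra.TensorProduct.tmul_mul_tmul, LinearMap.rTensorAddLTensor_tmul, hd _ _,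
        add_mul, mul_add, add_tmul, tmul_add]
      abel

end IsDerivation

namespace TensorAlgebra

section CommRing

variable {R V : Type*} [CommRing R] [AddCommGroup V] [Module R V]

theorem eq_of_isDerivation {d₁ d₂ : Module.End R (TensorAlgebra R V)} (h₁ : IsDerivation d₁)
    (h₂ : IsDerivation d₂) (hι : ∀ v, d₁ (ι R v) = d₂ (ι R v)) : d₁ = d₂ := by
  ext x
  induction x using TensorAlgebra.induction with
  | algebraMap r => rw [h₁.map_algebraMap, h₂.map_algebraMap]
  | ι v => exact hι v
  | mul a b ha hb => rw [h₁, h₂, ha, hb]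
  | add a b ha hb => rw [map_add, map_add, ha, hb]

/-- `x ↦ (x, d x)` is an algebra morphism into the dual numbers exactly when `d` is a
derivation. -/
noncomputable def derivLiftDual (g : V →ₗ[R] V) :
    TensorAlgebra R V →ₐ[R] DualNumber (TensorAlgebra R V) :=
  lift R
    (LinearMap.prod (ι R) (ι R ∘ₗ g) : V →ₗ[R] TensorAlgebra R V × TensorAlgebra R V)

theorem fst_derivLiftDual (g : V →ₗ[R] V) (x : TensorAlgebra R V) :
    (derivLiftDual g x).fst = x := by
  have : (TrivSqZeroExt.fstHom R _ _).comp (derivLiftDual g) = AlgHom.id R _ := by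
    ext v
    exact congrArg TrivSqZeroExt.fst (lift_ι_apply (A := DualNumber (TensorAlgebra R V)) _ v)
  exact DFunLike.congr_fun this x

noncomputable def derivLiftFun (g : V →ₗ[R] V) : Module.End R (TensorAlgebra R V) where
  toFun x := (derivLiftDual g x).snd
  map_add' _ _ := by simp
  map_smul' _ _ := by simp

theorem derivLiftFun_ι (g : V →ₗ[R] V) (v : V) : derivLiftFun g (ι R v) = ι R (g v) :=
  congrArg TrivSqZeroExt.snd (lift_ι_apply (A := DualNumber (TensorAlgebra R V)) _ v)

theorem isDerivation_derivLiftFun (g : V →ₗ[R] V) : IsDerivation (derivLiftFun g) := by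
  intro a b
  simp [derivLiftFun, TrivSqZeroExt.snd_mul, fst_derivLiftDual, MulOpposite.smul_eq_mul_unop,
    add_comm]

noncomputable def derivLift : (V →ₗ[R] V) →ₗ[R] Module.End R (TensorAlgebra R V) where
  toFun := derivLiftFun
  map_add' g₁ g₂ := eq_of_isDerivation (isDerivation_derivLiftFun _)
    ((isDerivation_derivLiftFun _).add (isDerivation_derivLiftFun _))
    fun v => by simp [derivLiftFun_ι]
  map_smul' r g := eq_of_isDerivation (isDerivation_derivLiftFun _)
    ((isDerivation_derivLiftFun _).smul r) fun v => by simp [derivLiftFun_ι]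

@[simp]
theorem derivLift_ι (g : V →ₗ[R] V) (v : V) : derivLift g (ι R v) = ι R (g v) :=
  derivLiftFun_ι g v

theorem isDerivation_derivLift (g : V →ₗ[R] V) : IsDerivation (derivLift g) :=
  isDerivation_derivLiftFun g

/-- The span of the words of length `< n`. -/
def degreeLT : ℕ → Submodule R (TensorAlgebra R V)
  | 0 => ⊥
  | n + 1 => 1 ⊔ degreeLT n * LinearMap.range (ι R)

theorem degreeLT_succ_le {n : ℕ} {S : Submodule R (TensorAlgebra R V)} (h1 : 1 ∈ S)
    (hι : ∀ a ∈ degreeLT n, ∀ v, a * ι R v ∈ S) : degreeLT (n + 1) ≤ S :=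
  sup_le (Submodule.one_le.mpr h1) <|
    Submodule.mul_le.mpr fun a ha _ ⟨v, hv⟩ => hv ▸ hι a ha v

theorem one_mem_degreeLT_succ (n : ℕ) : (1 : TensorAlgebra R V) ∈ degreeLT (n + 1) :=
  Submodule.mem_sup_left (Submodule.one_le.mp le_rfl)

theorem mul_ι_mem_degreeLT_succ {n : ℕ} {a : TensorAlgebra R V} (ha : a ∈ degreeLT n) (v : V) :
    a * ι R v ∈ degreeLT (n + 1) :=
  Submodule.mem_sup_right (Submodule.mul_mem_mul ha ⟨v, rfl⟩)

theorem degreeLT_mono : Monotone (degreeLT : ℕ → Submodule R (TensorAlgebra R V)) := by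
  refine monotone_nat_of_le_succ fun n => ?_
  induction n with
  | zero => exact bot_le
  | succ n ih =>
    exact degreeLT_succ_le (one_mem_degreeLT_succ _) fun a ha v =>
      mul_ι_mem_degreeLT_succ (ih ha) v

theorem mul_mem_degreeLT_add {i j : ℕ} {a b : TensorAlgebra R V} (ha : a ∈ degreeLT i)
    (hb : b ∈ degreeLT j) : a * b ∈ degreeLT (i + j) := by
  suffices degreeLT j ≤ (degreeLT (i + j)).comap (LinearMap.mulLeft R a) from this hb
  clear hb b
  induction j with
  | zero => exact bot_le
  | succ j ih =>
    refine degreeLT_succ_le ?_ fun b hb v => ?_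
    · simpa using degreeLT_mono (by omega) ha
    · simpa [← mul_assoc, ← add_assoc] using mul_ι_mem_degreeLT_succ (ih hb) v

theorem exists_mem_degreeLT (x : TensorAlgebra R V) : ∃ n, x ∈ degreeLT n := by
  induction x using TensorAlgebra.induction with
  | algebraMap r =>
    refine ⟨1, ?_⟩
    rw [Algebra.algebraMap_eq_smul_one]
    exact Submodule.smul_mem _ r (one_mem_degreeLT_succ 0)
  | ι v => exact ⟨2, by simpa using mul_ι_mem_degreeLT_succ (one_mem_degreeLT_succ 0) v⟩
  | mul a b ha hb =>
    obtain ⟨i, hi⟩ := ha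
    obtain ⟨j, hj⟩ := hb
    exact ⟨i + j, mul_mem_degreeLT_add hi hj⟩
  | add a b ha hb =>
    obtain ⟨i, hi⟩ := ha
    obtain ⟨j, hj⟩ := hb
    exact ⟨max i j, add_mem (degreeLT_mono (le_max_left i j) hi)
      (degreeLT_mono (le_max_right i j) hj)⟩

end CommRing

section Field

variable {K V : Type*} [Field K] [AddCommGroup V] [Module K V]

@[simp]
theorem taCounit_ι (v : V) : taCounit K V (ι K v) = 0 := by
  simp [taCounit]

@[simp]
theorem taComul_ι (v : V) : taComul K V (ι K v) = ι K v ⊗ₜ 1 + 1 ⊗ₜ ι K v := by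
  simp [taComul]

theorem taCounit_derivLift (g : V →ₗ[K] V) (x : TensorAlgebra K V) :
    taCounit K V (derivLift g x) = 0 := by
  induction x using TensorAlgebra.induction with
  | algebraMap r => simp [(isDerivation_derivLift g).map_algebraMap]
  | ι v => simp
  | mul a b ha hb => simp [isDerivation_derivLift g a b, ha, hb]
  | add a b ha hb => simp [ha, hb]

theorem taComul_derivLift (g : V →ₗ[K] V) (x : TensorAlgebra K V) :
    taComul K V (derivLift g x) = (derivLift g).rTensorAddLTensor (taComul K V x) := by
  induction x using TensorAlgebra.induction with
  | algebraMap r =>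
    simp [(isDerivation_derivLift g).map_algebraMap, (isDerivation_derivLift g).map_one]
  | ι v => simp [(isDerivation_derivLift g).map_one]
  | mul a b ha hb =>
    rw [isDerivation_derivLift g a b, map_add, map_mul, map_mul, ha, hb, map_mul,
      (isDerivation_derivLift g).rTensorAddLTensor]
  | add a b ha hb => simp [ha, hb]

end Field

end TensorAlgebra

namespace MagmaticExtension

open TensorAlgebra

section CommRing

variable {R V : Type*} [CommRing R] [AddCommGroup V] [Module R V] (m : V →ₗ[R] V →ₗ[R] V)

local notation "T" => TensorAlgebra R V

noncomputable def rightDer : V →ₗ[R] Module.End R T := derivLift ∘ₗ m.flip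

@[simp]
theorem rightDer_ι (y v : V) : rightDer m y (ι R v) = ι R (m v y) := by
  simp [rightDer]

theorem isDerivation_rightDer (y : V) : IsDerivation (rightDer m y) :=
  isDerivation_derivLift _

theorem rightDer_mem_degreeLT (y : V) {n : ℕ} {x : T} (hx : x ∈ degreeLT n) :
    rightDer m y x ∈ degreeLT n := by
  suffices degreeLT n ≤ (degreeLT n).comap (rightDer m y) from this hx
  clear hx x
  induction n with
  | zero => exact bot_le
  | succ n ih =>
    refine degreeLT_succ_le (by simp [(isDerivation_rightDer m y).map_one]) fun a ha v => ?_
    rw [Submodule.mem_comap, isDerivation_rightDer, rightDer_ι]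
    exact add_mem (mul_ι_mem_degreeLT_succ (ih ha) v) (mul_ι_mem_degreeLT_succ ha _)

noncomputable def twistedMul : V →ₗ[R] Module.End R T :=
  (LinearMap.mul R T).flip ∘ₗ ι R + rightDer m

theorem twistedMul_eq (y : V) : twistedMul m y = LinearMap.mulRight R (ι R y) + rightDer m y :=
  rfl

theorem twistedMul_apply (y : V) (h : T) : twistedMul m y h = h * ι R y + rightDer m y h :=
  rfl

noncomputable def twistedMulHom : T →ₐ[R] (Module.End R T)ᵐᵒᵖ :=
  TensorAlgebra.lift R ((MulOpposite.opLinearEquiv R).toLinearMap ∘ₗ twistedMul m)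

noncomputable def rightDerHom : T →ₐ[R] (Module.End R T)ᵐᵒᵖ :=
  TensorAlgebra.lift R ((MulOpposite.opLinearEquiv R).toLinearMap ∘ₗ rightDer m)

@[simp]
theorem rightDerHom_ι (y : V) : rightDerHom m (ι R y) = MulOpposite.op (rightDer m y) := by
  simp [rightDerHom]

/-- `twist m (y₁ ⋯ yₙ) = Φ_{yₙ} (⋯ (Φ_{y₁} 1))`, where `Φ_y = twistedMul m y`. -/
noncomputable def twist : T →ₗ[R] T :=
  LinearMap.applyₗ 1 ∘ₗ (MulOpposite.opLinearEquiv R).symm.toLinearMap ∘ₗ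
    (twistedMulHom m).toLinearMap

@[simp]
theorem twist_one : twist m 1 = 1 := by
  simp [twist]

theorem twist_mul_ι (k : T) (y : V) : twist m (k * ι R y) = twistedMul m y (twist m k) := by
  simp [twist, twistedMulHom]

theorem twist_sub_self_mem {n : ℕ} {x : T} (hx : x ∈ degreeLT (n + 1)) :
    twist m x - x ∈ degreeLT n := by
  induction n generalizing x with
  | zero =>
    refine degreeLT_succ_le (S := (degreeLT 0).comap (twist m - LinearMap.id)) (by simp)
      (fun a ha v => ?_) hx
    obtain rfl : a = 0 := ha
    simp
  | succ n ih =>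
    refine degreeLT_succ_le (S := (degreeLT (n + 1)).comap (twist m - LinearMap.id)) (by simp)
      (fun a ha v => ?_) hx
    have key : twist m (a * ι R v) - a * ι R v
        = (twist m a - a) * ι R v + rightDer m v a + rightDer m v (twist m a - a) := by
      rw [twist_mul_ι, twistedMul_apply, map_sub]
      noncomm_ring
    rw [Submodule.mem_comap, LinearMap.sub_apply, LinearMap.id_apply, key]
    exact add_mem (add_mem (mul_ι_mem_degreeLT_succ (ih ha) v) (rightDer_mem_degreeLT m v ha))
      (degreeLT_mono n.le_succ (rightDer_mem_degreeLT m v (ih ha)))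

theorem twist_injective : Function.Injective (twist m) := by
  suffices h : ∀ n, ∀ x ∈ degreeLT n, twist m x = 0 → x = 0 by
    refine (injective_iff_map_eq_zero _).mpr fun x hx => ?_
    obtain ⟨n, hn⟩ := exists_mem_degreeLT x
    exact h n x hn hx
  intro n
  induction n with
  | zero => exact fun x hx _ => hx
  | succ n ih =>
    intro x hx h0
    refine ih x ?_ h0
    simpa [h0] using neg_mem (twist_sub_self_mem m hx)

@[elab_as_elim]
theorem twisted_induction {motive : T → Prop} (one : motive 1)
    (twisted : ∀ y h, motive h → motive (twistedMul m y h))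
    (add : ∀ a b, motive a → motive b → motive (a + b))
    (smul : ∀ (r : R) a, motive a → motive (r • a)) (x : T) : motive x := by
  let S : Submodule R T :=
    { carrier := {x | motive x}
      add_mem' := add _ _
      zero_mem' := by simpa using smul 0 1 one
      smul_mem' := smul }
  suffices h : ∀ n, degreeLT n ≤ S from (exists_mem_degreeLT x).elim fun n hn => h n hn
  intro n
  induction n with
  | zero => exact bot_le
  | succ n ih =>
    refine degreeLT_succ_le one fun a ha v => ?_
    have : a * ι R v = twistedMul m v a + (-1 : R) • rightDer m v a := by
      rw [twistedMul_apply, neg_one_smul, add_neg_cancel_right]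
    rw [this]
    exact add _ _ (twisted v a (ih ha)) (smul _ _ (ih (rightDer_mem_degreeLT m v ha)))

theorem twist_surjective : Function.Surjective (twist m) := by
  rw [← LinearMap.range_eq_top, eq_top_iff]
  rintro x -
  induction x using twisted_induction m with
  | one => exact ⟨1, twist_one m⟩
  | twisted y h ih =>
    obtain ⟨k, rfl⟩ := ih
    exact ⟨k * ι R y, twist_mul_ι m k y⟩
  | add a b ha hb => exact add_mem ha hb
  | smul r a ha => exact Submodule.smul_mem _ r ha

noncomputable def twistEquiv : T ≃ₗ[R] T :=
  LinearEquiv.ofBijective (twist m) ⟨twist_injective m, twist_surjective m⟩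

/-- `rightAction m g` is the operator `f ↦ f * g`. -/
noncomputable def rightAction : T →ₗ[R] Module.End R T :=
  (MulOpposite.opLinearEquiv R).symm.toLinearMap ∘ₗ (rightDerHom m).toLinearMap ∘ₗ
    (twistEquiv m).symm.toLinearMap

theorem rightAction_twist (k : T) : rightAction m (twist m k) = (rightDerHom m k).unop := by
  have : (twistEquiv m).symm (twist m k) = k := (twistEquiv m).symm_apply_apply k
  simp [rightAction, this]

theorem rightAction_one : rightAction m 1 = LinearMap.id := by
  rw [← twist_one m, rightAction_twist, map_one, MulOpposite.unop_one, Module.End.one_eq_id]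

theorem rightAction_twistedMul (y : V) (h : T) :
    rightAction m (twistedMul m y h) = rightDer m y ∘ₗ rightAction m h := by
  obtain ⟨k, rfl⟩ := twist_surjective m h
  rw [← twist_mul_ι, rightAction_twist, rightAction_twist, map_mul, MulOpposite.unop_mul,
    rightDerHom_ι, MulOpposite.unop_op, Module.End.mul_eq_comp]

noncomputable def extendMul : T →ₗ[R] T →ₗ[R] T := (rightAction m).flip

@[simp]
theorem extendMul_one_right (f : T) : extendMul m f 1 = f := by
  simp [extendMul, rightAction_one]

theorem extendMul_twistedMul (f : T) (y : V) (h : T) :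
    extendMul m f (twistedMul m y h) = rightDer m y (extendMul m f h) := by
  simp [extendMul, rightAction_twistedMul]

@[simp]
theorem extendMul_ι_right (f : T) (y : V) : extendMul m f (ι R y) = rightDer m y f := by
  simpa [twistedMul_apply, (isDerivation_rightDer m y).map_one] using
    extendMul_twistedMul m f y 1

theorem extendMul_mul_ι (f g : T) (y : V) :
    extendMul m f (g * ι R y)
      = extendMul m (extendMul m f g) (ι R y) - extendMul m f (extendMul m g (ι R y)) := by
  rw [extendMul_ι_right, extendMul_ι_right, ← extendMul_twistedMul, twistedMul_apply, map_add,
    add_sub_cancel_right]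

theorem eq_extendMul (B : T →ₗ[R] T →ₗ[R] T) (one : ∀ f, B f 1 = f)
    (twisted : ∀ f y h, B f (twistedMul m y h) = rightDer m y (B f h)) : B = extendMul m := by
  ext f h
  induction h using twisted_induction m with
  | one => rw [one, extendMul_one_right]
  | twisted y h ih => rw [twisted, extendMul_twistedMul, ih]
  | add a b ha hb => rw [map_add, map_add, ha, hb]
  | smul r a ha => rw [map_smul, map_smul, ha]

end CommRing

section Field

variable {K V : Type*} [Field K] [AddCommGroup V] [Module K V] (m : V →ₗ[K] V →ₗ[K] V)

local notation "T" => TensorAlgebra K V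

theorem taCounit_rightDer (y : V) (x : T) : taCounit K V (rightDer m y x) = 0 :=
  taCounit_derivLift _ x

theorem taComul_rightDer (y : V) (x : T) :
    taComul K V (rightDer m y x) = (rightDer m y).rTensorAddLTensor (taComul K V x) :=
  taComul_derivLift _ x

theorem taCounit_twistedMul (y : V) (h : T) : taCounit K V (twistedMul m y h) = 0 := by
  simp [twistedMul_apply, taCounit_rightDer]

theorem mul_taComul_ι (z : T ⊗[K] T) (y : V) :
    z * taComul K V (ι K y) = (LinearMap.mulRight K (ι K y)).rTensorAddLTensor z := by
  induction z with
  | zero => simp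
  | add z₁ z₂ h₁ h₂ => rw [add_mul, h₁, h₂, map_add]
  | tmul a b => simp [mul_add]

theorem taComul_twistedMul (y : V) (h : T) :
    taComul K V (twistedMul m y h) = (twistedMul m y).rTensorAddLTensor (taComul K V h) := by
  rw [twistedMul_apply, map_add, map_mul, mul_taComul_ι, taComul_rightDer, twistedMul_eq,
    LinearMap.rTensorAddLTensor_add, LinearMap.add_apply]

theorem taCounit_extendMul (f g : T) :
    taCounit K V (extendMul m f g) = taCounit K V f * taCounit K V g := by
  induction g using twisted_induction m with
  | one => simp
  | twisted y h _ => rw [extendMul_twistedMul, taCounit_rightDer, taCounit_twistedMul, mul_zero]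
  | add a b ha hb => simp [ha, hb, mul_add]
  | smul r a ha => simp [ha, mul_left_comm]

theorem extendMul_one_left (f : T) : extendMul m 1 f = taCounit K V f • 1 := by
  induction f using twisted_induction m with
  | one => simp
  | twisted y h ih => rw [extendMul_twistedMul, ih, map_smul, (isDerivation_rightDer m y).map_one,
      smul_zero, taCounit_twistedMul, zero_smul]
  | add a b ha hb => simp [ha, hb, add_smul]
  | smul r a ha => simp [ha, smul_smul]

theorem map₂_extendMul_one (z : T ⊗[K] T) : map₂ (extendMul m) (extendMul m) z 1 = z := by
  induction z with
  | zero => simp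
  | add a b ha hb => simp [ha, hb]
  | tmul a b => simp [Algebra.TensorProduct.one_def]

theorem rTensorAddLTensor_rightDer_map₂ (y : V) (z w : T ⊗[K] T) :
    (rightDer m y).rTensorAddLTensor (map₂ (extendMul m) (extendMul m) z w)
      = map₂ (extendMul m) (extendMul m) z ((twistedMul m y).rTensorAddLTensor w) := by
  induction z with
  | zero => simp
  | add a b ha hb => simp [ha, hb]
  | tmul a b =>
    induction w with
    | zero => simp
    | add c d hc hd => simp only [map_add, hc, hd]
    | tmul c d => simp [extendMul_twistedMul]

theorem taComul_extendMul (f g : T) :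
    taComul K V (extendMul m f g)
      = map₂ (extendMul m) (extendMul m) (taComul K V f) (taComul K V g) := by
  induction g using twisted_induction m with
  | one => rw [extendMul_one_right, map_one, map₂_extendMul_one]
  | twisted y h ih => rw [extendMul_twistedMul, taComul_rightDer, ih,
      rTensorAddLTensor_rightDer_map₂, taComul_twistedMul]
  | add a b ha hb => simp [ha, hb]
  | smul r a ha => simp [ha]

theorem rightDer_lift_mul_extendMul (f g : T) (y : V) (z : T ⊗[K] T) :
    rightDer m y
        (TensorProduct.lift ((LinearMap.mul K T).compl₁₂ (extendMul m f) (extendMul m g)) z)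
      = TensorProduct.lift ((LinearMap.mul K T).compl₁₂ (extendMul m f) (extendMul m g))
          ((twistedMul m y).rTensorAddLTensor z) := by
  induction z with
  | zero => simp
  | add a b ha hb => simp only [map_add, ha, hb]
  | tmul c d => simp [isDerivation_rightDer m y _ _, extendMul_twistedMul]

theorem extendMul_mul_left (f g h : T) :
    extendMul m (f * g) h
      = TensorProduct.lift ((LinearMap.mul K T).compl₁₂ (extendMul m f) (extendMul m g))
          (taComul K V h) := by
  induction h using twisted_induction m with
  | one => simp [Algebra.TensorProduct.one_def]
  | twisted y h ih =>
    rw [extendMul_twistedMul, ih, rightDer_lift_mul_extendMul, taComul_twistedMul]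
  | add a b ha hb => simp [ha, hb]
  | smul r a ha => simp [ha]

theorem twistedMul_lift_mul_extendMul (g : T) (y : V) (z : T ⊗[K] T) :
    twistedMul m y
        (TensorProduct.lift ((LinearMap.mul K T).compl₁₂ (extendMul m g) LinearMap.id) z)
      = TensorProduct.lift ((LinearMap.mul K T).compl₁₂ (extendMul m g) LinearMap.id)
          ((twistedMul m y).rTensorAddLTensor z) := by
  induction z with
  | zero => simp
  | add a b ha hb => simp only [map_add, ha, hb]
  | tmul c d =>
    simp only [LinearMap.rTensorAddLTensor_tmul, map_add, TensorProduct.lift.tmul,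
      LinearMap.compl₁₂_apply, LinearMap.mul_apply', LinearMap.id_apply, extendMul_twistedMul]
    simp only [twistedMul_apply, isDerivation_rightDer m y _ _, mul_add, mul_assoc]
    abel

theorem extendMul_extendMul (f g h : T) :
    extendMul m (extendMul m f g) h
      = extendMul m f (TensorProduct.lift
          ((LinearMap.mul K T).compl₁₂ (extendMul m g) LinearMap.id) (taComul K V h)) := by
  induction h using twisted_induction m with
  | one => simp [Algebra.TensorProduct.one_def]
  | twisted y h ih => rw [extendMul_twistedMul, ih, ← extendMul_twistedMul,
      twistedMul_lift_mul_extendMul, taComul_twistedMul]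
  | add a b ha hb => simp [ha, hb]
  | smul r a ha => simp [ha]

theorem eq_extendMul_of_ι_of_one_of_mul_ι_of_mul_left (B : T →ₗ[K] T →ₗ[K] T)
    (hι : ∀ v w : V, B (ι K v) (ι K w) = ι K (m v w))
    (one_right : ∀ f, B f 1 = f)
    (one_left : ∀ f, B 1 f = taCounit K V f • 1)
    (mul_ι : ∀ f g (y : V), B f (g * ι K y) = B (B f g) (ι K y) - B f (B g (ι K y)))
    (mul_left : ∀ f g h,
      B (f * g) h
        = TensorProduct.lift ((LinearMap.mul K T).compl₁₂ (B f) (B g)) (taComul K V h)) :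
    B = extendMul m := by
  have ι_right (f : T) (y : V) : B f (ι K y) = rightDer m y f := by
    induction f using TensorAlgebra.induction with
    | algebraMap r =>
      simp [Algebra.algebraMap_eq_smul_one, one_left, (isDerivation_rightDer m y).map_one]
    | ι v => rw [hι, rightDer_ι]
    | mul a b ha hb => simp [mul_left, one_right, ha, hb, isDerivation_rightDer m y a b]
    | add a b ha hb => rw [map_add, LinearMap.add_apply, ha, hb, map_add]
  refine eq_extendMul m B one_right fun f y h => ?_
  rw [twistedMul_apply, map_add, mul_ι, ι_right, ι_right, sub_add_cancel]

end Field

end MagmaticExtension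

open MagmaticExtension in
theorem statement8 {K V : Type*} [Field K] [AddCommGroup V] [Module K V]
    (m : V →ₗ[K] V →ₗ[K] V) :
    ∃! B : TensorAlgebra K V →ₗ[K] TensorAlgebra K V →ₗ[K] TensorAlgebra K V,
      (∀ v w : V, B (TensorAlgebra.ι K v) (TensorAlgebra.ι K w)
          = TensorAlgebra.ι K (m v w))
      ∧ (∀ f g, taCounit K V (B f g) = taCounit K V f * taCounit K V g)
      ∧ (∀ f g, taComul K V (B f g)
            = TensorProduct.map₂ B B (taComul K V f) (taComul K V g))
      ∧ (∀ f, B f 1 = f)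
      ∧ (∀ f, B 1 f = taCounit K V f • (1 : TensorAlgebra K V))
      ∧ (∀ f g (y : V), B f (g * TensorAlgebra.ι K y)
            = B (B f g) (TensorAlgebra.ι K y) - B f (B g (TensorAlgebra.ι K y)))
      ∧ (∀ f g h, B (f * g) h
            = TensorProduct.lift
                ((LinearMap.mul K (TensorAlgebra K V)).compl₁₂ (B f) (B g))
                (taComul K V h))
      ∧ (∀ f g h, B (B f g) h
            = B f (TensorProduct.lift
                ((LinearMap.mul K (TensorAlgebra K V)).compl₁₂ (B g) LinearMap.id)
                (taComul K V h))) := by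
  refine ⟨extendMul m, ⟨fun v w => by simp, taCounit_extendMul m, taComul_extendMul m,
    extendMul_one_right m, extendMul_one_left m, extendMul_mul_ι m, extendMul_mul_left m,
    extendMul_extendMul m⟩, ?_⟩
  rintro B ⟨hι, -, -, one_right, one_left, mul_ι, mul_left, -⟩
  exact eq_extendMul_of_ι_of_one_of_mul_ι_of_mul_left m B hι one_right one_left mul_ι mul_left
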